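/- arXiv:2603.14599 — 3 statements merged into one kernel-verified Lean document; each statement's English description precedes it below -/
import Mathlib

section
/- Let G₁, G₂ be countable groups, π: G₁ → G₂ an epimorphism, and μ, {μ_k} probability measures on G₁ with finite Shannon entropy such that μ_k → μ pointwise and H(μ_k) → H(μ). Then π_*μ_k → π_*μ pointwise on G₂ and H(π_*μ_k) → H(π_*μ). -/
open Real Filter
open scoped ENNReal Classical

noncomputable section

/-- A probability mass function on a countable set, as a real-valued function. -/
def IsPMF {G : Type*} (μ : G → ℝ) : Prop := (∀ g, 0 ≤ μ g) ∧ ∑' g, μ g = 1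

/-- Convolution of two measures on a group. -/
def conv {G : Type*} [Group G] (μ ν : G → ℝ) : G → ℝ := fun g => ∑' h : G, μ h * ν (h⁻¹ * g)

/-- `n`-fold convolution power, with `μ^{*0} = δ_e`. -/
def convPow {G : Type*} [Group G] (μ : G → ℝ) : ℕ → G → ℝ
  | 0 => fun g => if g = 1 then 1 else 0
  | n + 1 => conv (convPow μ n) μ

/-- Shannon entropy of a measure on a countable set. -/
def Hent {G : Type*} (μ : G → ℝ) : ℝ := ∑' g : G, Real.negMulLog (μ g)

/-- Position of the random walk after `m` steps, given the first `n` increments. -/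
def walkProd {G : Type*} [Monoid G] {n : ℕ} (g : Fin n → G) (m : ℕ) : G :=
  ((List.ofFn g).take m).prod

/-- The escape probability of the `μ`-random walk: the probability of never
returning to the identity at any positive time, expressed as the infimum of the
finite-time non-return probabilities. -/
def pesc {G : Type*} [Group G] (μ : G → ℝ) : ℝ :=
  ⨅ n : ℕ, ∑' g : Fin n → G,
    if ∀ m, 1 ≤ m → m ≤ n → walkProd g m ≠ 1 then ∏ i, μ (g i) else 0

/-- Pushforward of a measure through a map. -/
def pushf {G₁ G₂ : Type*} (pr : G₁ → G₂) (μ : G₁ → ℝ) : G₂ → ℝ :=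
  fun h => ∑' g : {g : G₁ // pr g = h}, μ (g : G₁)

/-! With `η = negMulLog`, both conclusions are instances of dominated convergence for series with
moving dominators (Pratt's lemma): if `0 ≤ fₖ ≤ gₖ`, `fₖ → f` and `gₖ → g` pointwise and
`∑ gₖ → ∑ g`, then `∑ fₖ → ∑ f`. The mass of a fibre is dominated by taking `fₖ = 1_{π⁻¹h} μₖ`
and `gₖ = μₖ`. For the entropies take `fₖ = η ∘ π_*μₖ` and `gₖ = π_*(η ∘ μₖ)`: the domination is
the subadditivity `η (∑ xᵢ) ≤ ∑ η xᵢ`, and `gₖ → g` pointwise is the first part applied to `η ∘ μₖ`. -/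

open Topology

section DominatedConvergence

variable {ι α : Type*} {l : Filter ι} {f g : ι → α → ℝ} {F G : α → ℝ}

lemma tendsto_tsum_min_of_tendsto (hG : Summable G) (hG0 : ∀ a, 0 ≤ G a)
    (hf0 : ∀ i a, 0 ≤ f i a) (hf : ∀ a, Tendsto (f · a) l (𝓝 (F a))) :
    Tendsto (fun i => ∑' a, min (f i a) (G a)) l (𝓝 (∑' a, min (F a) (G a))) :=
  tendsto_tsum_of_dominated_convergence hG (fun a => (hf a).min tendsto_const_nhds) <|
    .of_forall fun i a => by
      rw [Real.norm_of_nonneg (le_min (hf0 i a) (hG0 a))]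
      exact min_le_right _ _

theorem tendsto_tsum_of_le_of_tendsto_tsum [l.NeBot] (hf0 : ∀ i a, 0 ≤ f i a)
    (hfg : ∀ i a, f i a ≤ g i a) (hg : ∀ i, Summable (g i)) (hG : Summable G)
    (hf : ∀ a, Tendsto (f · a) l (𝓝 (F a))) (hgG : ∀ a, Tendsto (g · a) l (𝓝 (G a)))
    (hsum : Tendsto (fun i => ∑' a, g i a) l (𝓝 (∑' a, G a))) :
    Tendsto (fun i => ∑' a, f i a) l (𝓝 (∑' a, F a)) := by
  have hg0 : ∀ i a, 0 ≤ g i a := fun i a => (hf0 i a).trans (hfg i a)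
  have hG0 : ∀ a, 0 ≤ G a := fun a => ge_of_tendsto' (hgG a) fun i => hg0 i a
  have hFG : ∀ a, F a ≤ G a := fun a =>
    le_of_tendsto_of_tendsto' (hf a) (hgG a) fun i => hfg i a
  have hf_sum : ∀ i, Summable (f i) := fun i => (hg i).of_nonneg_of_le (hf0 i) (hfg i)
  have hmin_sum : ∀ h : α → ℝ, (∀ a, 0 ≤ h a) → Summable fun a => min (h a) (G a) :=
    fun h h0 => hG.of_nonneg_of_le (fun a => le_min (h0 a) (hG0 a)) fun a => min_le_right _ _
  -- the mass of `g i` above `G`, which tends to zero; the mass of `f i` above `G` is smaller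
  have hexcess_g : Tendsto (fun i => ∑' a, g i a - ∑' a, min (g i a) (G a)) l (𝓝 0) := by
    simpa only [min_self, sub_self] using
      hsum.sub (tendsto_tsum_min_of_tendsto hG hG0 hg0 hgG)
  have hexcess_f : Tendsto (fun i => ∑' a, f i a - ∑' a, min (f i a) (G a)) l (𝓝 0) := by
    refine squeeze_zero (fun i => sub_nonneg.2 ?_) (fun i => ?_) hexcess_g
    · exact (hmin_sum _ (hf0 i)).tsum_le_tsum (fun a => min_le_left _ _) (hf_sum i)
    · rw [← (hf_sum i).tsum_sub (hmin_sum _ (hf0 i)), ← (hg i).tsum_sub (hmin_sum _ (hg0 i))]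
      refine ((hf_sum i).sub (hmin_sum _ (hf0 i))).tsum_le_tsum (fun a => ?_)
        ((hg i).sub (hmin_sum _ (hg0 i)))
      have := hfg i a
      simp only [min_def]
      split_ifs <;> linarith
  have hmin_f : Tendsto (fun i => ∑' a, min (f i a) (G a)) l (𝓝 (∑' a, F a)) := by
    simpa only [min_eq_left (hFG _)] using tendsto_tsum_min_of_tendsto hG hG0 hf0 hf
  simpa using hexcess_f.add hmin_f

end DominatedConvergence

lemma Real.negMulLog_tsum_le {ι : Type*} {x : ι → ℝ} (hx0 : ∀ i, 0 ≤ x i) (hx : Summable x)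
    (hηx : Summable fun i => negMulLog (x i)) :
    negMulLog (∑' i, x i) ≤ ∑' i, negMulLog (x i) := by
  set s := ∑' i, x i
  have hterm : ∀ i, x i * -log s ≤ negMulLog (x i) := by
    intro i
    rcases (hx0 i).eq_or_lt with hxi | hxi
    · simp [← hxi]
    · have := mul_le_mul_of_nonneg_left
        (log_le_log hxi (hx.le_tsum i fun j _ => hx0 j)) (hx0 i)
      rw [negMulLog]
      linarith
  calc negMulLog s = ∑' i, x i * -log s := by rw [tsum_mul_right, negMulLog, neg_mul_comm]
    _ ≤ ∑' i, negMulLog (x i) := (hx.mul_right _).tsum_le_tsum hterm hηx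

section Pushforward

variable {α β : Type*} (p : α → β) {ν : α → ℝ}

lemma IsPMF.summable (hν : IsPMF ν) : Summable ν := by
  by_contra h
  exact one_ne_zero (hν.2.symm.trans (tsum_eq_zero_of_not_summable h))

lemma IsPMF.le_one (hν : IsPMF ν) (a : α) : ν a ≤ 1 :=
  hν.2 ▸ hν.summable.le_tsum a fun b _ => hν.1 b

lemma IsPMF.negMulLog_nonneg (hν : IsPMF ν) (a : α) : 0 ≤ negMulLog (ν a) :=
  Real.negMulLog_nonneg (hν.1 a) (hν.le_one a)

lemma hasSum_pushf (hν : Summable ν) : HasSum (pushf p ν) (∑' a, ν a) :=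
  hν.hasSum.tsum_fiberwise p

lemma pushf_eq_tsum_indicator (b : β) : pushf p ν b = ∑' a, {a | p a = b}.indicator ν a :=
  tsum_subtype _ _

lemma IsPMF.pushf (hν : IsPMF ν) : IsPMF (pushf p ν) :=
  ⟨fun _ => tsum_nonneg fun a => hν.1 a, (hasSum_pushf p hν.summable).tsum_eq.trans hν.2⟩

lemma tendsto_pushf {ι : Type*} {l : Filter ι} [l.NeBot] {νs : ι → α → ℝ}
    (hνs0 : ∀ i a, 0 ≤ νs i a) (hνs : ∀ i, Summable (νs i)) (hν : Summable ν)
    (hpt : ∀ a, Tendsto (νs · a) l (𝓝 (ν a)))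
    (hsum : Tendsto (fun i => ∑' a, νs i a) l (𝓝 (∑' a, ν a))) (b : β) :
    Tendsto (fun i => pushf p (νs i) b) l (𝓝 (pushf p ν b)) := by
  simp only [pushf_eq_tsum_indicator]
  refine tendsto_tsum_of_le_of_tendsto_tsum
    (fun i a => Set.indicator_nonneg (fun a _ => hνs0 i a) a)
    (fun i a => Set.indicator_le_self' (fun a _ => hνs0 i a) a) hνs hν (fun a => ?_) hpt hsum
  by_cases ha : p a = b
  · simpa [Set.indicator_of_mem, ha] using hpt a
  · simp [Set.indicator_of_notMem, ha]

end Pushforward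

theorem stmt3_general {G₁ G₂ : Type*} [Group G₁] [Group G₂]
    (pr : G₁ →* G₂) (μ : G₁ → ℝ) (μk : ℕ → G₁ → ℝ)
    (hμ : IsPMF μ) (hμk : ∀ k, IsPMF (μk k))
    (hHμ : Summable (fun g => Real.negMulLog (μ g)))
    (hHμk : ∀ k, Summable (fun g => Real.negMulLog (μk k g)))
    (hconv : ∀ g : G₁, Tendsto (fun k => μk k g) atTop (nhds (μ g)))
    (hHconv : Tendsto (fun k => Hent (μk k)) atTop (nhds (Hent μ))) :
    (∀ h : G₂, Tendsto (fun k => pushf pr (μk k) h) atTop (nhds (pushf pr μ h))) ∧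
      Tendsto (fun k => Hent (pushf pr (μk k))) atTop (nhds (Hent (pushf pr μ))) := by
  have hpush : ∀ h, Tendsto (fun k => pushf pr (μk k) h) atTop (𝓝 (pushf pr μ h)) :=
    tendsto_pushf pr (fun k => (hμk k).1) (fun k => (hμk k).summable) hμ.summable hconv <| by
      simp only [(hμk _).2, hμ.2, tendsto_const_nhds]
  refine ⟨hpush, tendsto_tsum_of_le_of_tendsto_tsum
    (g := fun k => pushf pr fun g => negMulLog (μk k g)) (G := pushf pr fun g => negMulLog (μ g))
    (fun k => ((hμk k).pushf pr).negMulLog_nonneg)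
    (fun k _ => negMulLog_tsum_le (fun g => (hμk k).1 g) ((hμk k).summable.subtype _)
      ((hHμk k).subtype _))
    (fun k => (hasSum_pushf pr (hHμk k)).summable) (hasSum_pushf pr hHμ).summable
    (fun h => (continuous_negMulLog.tendsto _).comp (hpush h))
    (tendsto_pushf pr (fun k => (hμk k).negMulLog_nonneg) hHμk hHμ
      (fun g => (continuous_negMulLog.tendsto _).comp (hconv g)) hHconv) ?_⟩
  convert hHconv using 2
  · exact (hasSum_pushf pr (hHμk _)).tsum_eq
  · exact (hasSum_pushf pr hHμ).tsum_eq

/-- Pointwise convergence together with convergence of finite Shannon entropies is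
preserved under pushforward through a surjective homomorphism. -/
theorem stmt3 {G₁ G₂ : Type*} [Group G₁] [Group G₂] [Countable G₁] [Countable G₂]
    (pr : G₁ →* G₂) (hsurj : Function.Surjective pr) (μ : G₁ → ℝ) (μk : ℕ → G₁ → ℝ)
    (hμ : IsPMF μ) (hμk : ∀ k, IsPMF (μk k))
    (hHμ : Summable (fun g => Real.negMulLog (μ g)))
    (hHμk : ∀ k, Summable (fun g => Real.negMulLog (μk k g)))
    (hconv : ∀ g : G₁, Tendsto (fun k => μk k g) atTop (nhds (μ g)))
    (hHconv : Tendsto (fun k => Hent (μk k)) atTop (nhds (Hent μ))) :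
    (∀ h : G₂, Tendsto (fun k => pushf pr (μk k) h) atTop (nhds (pushf pr μ h))) ∧
      Tendsto (fun k => Hent (pushf pr (μk k))) atTop (nhds (Hent (pushf pr μ))) :=
  stmt3_general pr μ μk hμ hμk hHμ hHμk hconv hHconv
end
end

section
/- Let G be a countable group containing a nonabelian free subgroup F₂ as a direct factor, i.e., G = F₂ × L. Let η be the uniform measure on a symmetric free generating set of F₂, and let μ, {μ_k} be probability measures on L with supports in a fixed finite set, μ_k → μ pointwise, h(μ_k) = 0 for all k, and h(μ) > 0. Set ν_k = η ⊗ μ_k and ν = η ⊗ μ. Then ν_k → ν pointwise, h(ν_k) = h(η) > 0 for all k, and lim_k h(ν_k) = h(η) < h(η) + h(μ) = h(ν). In particular asymptotic entropy can be discontinuous along sequences where all asymptotic entropies are strictly positive. -/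
open Real Filter
open scoped ENNReal Classical

noncomputable section

/-- The uniform measure on the symmetric free generating set of the free group of rank 2. -/
def etaF2 : FreeGroup (Fin 2) → ℝ := fun x =>
  if x = FreeGroup.of 0 ∨ x = FreeGroup.of 1 ∨
      x = (FreeGroup.of 0)⁻¹ ∨ x = (FreeGroup.of 1)⁻¹ then (1 : ℝ) / 4 else 0

/-!
For finitely supported probability vectors, `n ↦ H(p^{*n})` is subadditive, so `H(p^{*n})/n`
converges by Fekete's lemma, and the convolution powers of a product measure `α ⊗ β` are the
products of the convolution powers, whence `h(α ⊗ β) = h(α) + h(β)`. It remains to see that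
`h(η) > 0`. In the Cayley tree of `F₂`, of the four neighbours `g s` of `g` at least three are
one step farther from `1` than `g`. By induction this gives `η^{*n}(g) ≤ 3^{-|g|}` and
`E|X_n| ≥ n/2`, hence `H(η^{*n}) ≥ E|X_n| log 3 ≥ (n/2) log 3`.
-/

open Topology FreeGroup
open scoped Pointwise

namespace RandomWalkEntropy

section PMF

variable {G L : Type*}

structure IsPMFOn (p : G → ℝ) (s : Finset G) : Prop where
  nonneg : ∀ g, 0 ≤ p g
  eq_zero_of_notMem : ∀ g ∉ s, p g = 0
  sum_eq_one : ∑ g ∈ s, p g = 1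

lemma _root_.IsPMF.isPMFOn {p : G → ℝ} (hp : IsPMF p) {s : Finset G}
    (hs : ∀ g, p g ≠ 0 → g ∈ s) : IsPMFOn p s where
  nonneg := hp.1
  eq_zero_of_notMem g hg := by_contra fun h => hg (hs g h)
  sum_eq_one := by
    rw [← hp.2, tsum_eq_sum fun g hg => by_contra fun h => hg (hs g h)]

lemma Hent_eq_sum {p : G → ℝ} {s : Finset G} (hp : ∀ g ∉ s, p g = 0) :
    Hent p = ∑ g ∈ s, negMulLog (p g) :=
  tsum_eq_sum fun g hg => by rw [hp g hg, negMulLog_zero]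

lemma IsPMFOn.le_one {p : G → ℝ} {s : Finset G} (hp : IsPMFOn p s) (g : G) : p g ≤ 1 := by
  by_cases hg : g ∈ s
  · rw [← hp.sum_eq_one]
    exact Finset.single_le_sum (fun x _ => hp.nonneg x) hg
  · rw [hp.eq_zero_of_notMem g hg]
    exact zero_le_one

lemma IsPMFOn.Hent_nonneg {p : G → ℝ} {s : Finset G} (hp : IsPMFOn p s) : 0 ≤ Hent p := by
  rw [Hent_eq_sum hp.eq_zero_of_notMem]
  exact Finset.sum_nonneg fun g _ => negMulLog_nonneg (hp.nonneg g) (hp.le_one g)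

lemma sum_sum_negMulLog_mul {p : G → ℝ} {q : L → ℝ} {s : Finset G} {t : Finset L}
    (hp : IsPMFOn p s) (hq : IsPMFOn q t) :
    ∑ a ∈ s, ∑ b ∈ t, negMulLog (p a * q b) = Hent p + Hent q := by
  simp only [negMulLog_mul, Finset.sum_add_distrib, ← Finset.sum_mul, ← Finset.mul_sum,
    hq.sum_eq_one, hp.sum_eq_one, one_mul, Hent_eq_sum hp.eq_zero_of_notMem,
    Hent_eq_sum hq.eq_zero_of_notMem]

lemma negMulLog_add_le {a b : ℝ} (ha : 0 ≤ a) (hb : 0 ≤ b) :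
    negMulLog (a + b) ≤ negMulLog a + negMulLog b := by
  rcases ha.eq_or_lt with rfl | ha
  · simp
  rcases hb.eq_or_lt with rfl | hb
  · simp
  have hla : a * log a ≤ a * log (a + b) := by gcongr; linarith
  have hlb : b * log b ≤ b * log (a + b) := by gcongr; linarith
  simp only [negMulLog, neg_mul]
  linarith

lemma negMulLog_sum_le {ι : Type*} (u : Finset ι) {f : ι → ℝ} (hf : ∀ i ∈ u, 0 ≤ f i) :
    negMulLog (∑ i ∈ u, f i) ≤ ∑ i ∈ u, negMulLog (f i) :=
  Finset.le_sum_of_subadditive_on_pred negMulLog (0 ≤ ·) (by simp)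
    (fun _ _ => negMulLog_add_le) (fun _ _ => add_nonneg) f hf

lemma mul_mul_log_le_negMulLog {p b : ℝ} {k : ℕ} (hp : 0 ≤ p) (h : p ≤ b⁻¹ ^ k) :
    p * (k * log b) ≤ negMulLog p := by
  rcases hp.eq_or_lt with rfl | hp
  · simp
  have hlog : log p ≤ -(k * log b) := by
    simpa [Real.log_pow, Real.log_inv] using Real.log_le_log hp h
  rw [negMulLog, neg_mul]
  nlinarith

end PMF

section Convolution

variable {G : Type*} [Group G] {p q : G → ℝ} {s t : Finset G}

lemma conv_apply_eq_sum (hp : ∀ g ∉ s, p g = 0) (q : G → ℝ) (g : G) :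
    conv p q g = ∑ a ∈ s, p a * q (a⁻¹ * g) :=
  tsum_eq_sum fun a ha => by rw [hp a ha, zero_mul]

lemma conv_convPow_zero (p q : G → ℝ) : conv p (convPow q 0) = p := by
  funext g
  rw [conv, tsum_eq_single g fun h hh => by simp [convPow, inv_mul_eq_one, hh]]
  simp [convPow]

variable [DecidableEq G]

lemma sum_comp_inv_mul_of_mem {F : G → ℝ} (hF : ∀ b ∉ t, F b = 0) {a : G} (ha : a ∈ s) :
    ∑ g ∈ s * t, F (a⁻¹ * g) = ∑ b ∈ t, F b := by
  have hsupp : ∀ g ∉ s * t, F (a⁻¹ * g) = 0 := fun g hg =>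
    hF _ fun hb => hg (by simpa using Finset.mul_mem_mul ha hb)
  calc ∑ g ∈ s * t, F (a⁻¹ * g) = ∑' g, F (a⁻¹ * g) := (tsum_eq_sum hsupp).symm
    _ = ∑' b, F b := (Equiv.mulLeft a⁻¹).tsum_eq F
    _ = ∑ b ∈ t, F b := tsum_eq_sum hF

lemma conv_eq_zero_of_notMem (hp : ∀ g ∉ s, p g = 0) (hq : ∀ g ∉ t, q g = 0) :
    ∀ g ∉ s * t, conv p q g = 0 := by
  intro g hg
  rw [conv_apply_eq_sum hp]
  refine Finset.sum_eq_zero fun a ha => ?_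
  rw [hq _ fun hb => hg (by simpa using Finset.mul_mem_mul ha hb), mul_zero]

lemma sum_conv_mul (hp : ∀ g ∉ s, p g = 0) (hq : ∀ g ∉ t, q g = 0) (f : G → ℝ) :
    ∑ g ∈ s * t, conv p q g * f g = ∑ a ∈ s, p a * ∑ b ∈ t, q b * f (a * b) := by
  simp only [conv_apply_eq_sum hp, Finset.sum_mul, Finset.mul_sum]
  rw [Finset.sum_comm]
  refine Finset.sum_congr rfl fun a ha => ?_
  rw [← sum_comp_inv_mul_of_mem (F := fun b => p a * (q b * f (a * b)))
    (fun b hb => by simp [hq b hb]) ha]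
  refine Finset.sum_congr rfl fun g _ => ?_
  simp only [mul_inv_cancel_left]
  ring

lemma conv_assoc (hp : ∀ g ∉ s, p g = 0) (hq : ∀ g ∉ t, q g = 0) (r : G → ℝ) :
    conv (conv p q) r = conv p (conv q r) := by
  funext g
  rw [conv_apply_eq_sum (conv_eq_zero_of_notMem hp hq), sum_conv_mul hp hq,
    conv_apply_eq_sum hp]
  refine Finset.sum_congr rfl fun a _ => ?_
  rw [conv_apply_eq_sum hq]
  simp only [mul_inv_rev, mul_assoc]

lemma isPMFOn_conv (hp : IsPMFOn p s) (hq : IsPMFOn q t) : IsPMFOn (conv p q) (s * t) where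
  nonneg _ := tsum_nonneg fun _ => mul_nonneg (hp.nonneg _) (hq.nonneg _)
  eq_zero_of_notMem := conv_eq_zero_of_notMem hp.eq_zero_of_notMem hq.eq_zero_of_notMem
  sum_eq_one := by
    simpa [← Finset.sum_mul, hq.sum_eq_one, hp.sum_eq_one] using
      sum_conv_mul hp.eq_zero_of_notMem hq.eq_zero_of_notMem 1

lemma convPow_eq_zero_of_notMem (hp : ∀ g ∉ s, p g = 0) :
    ∀ n, ∀ g ∉ s ^ n, convPow p n g = 0
  | 0 => fun g hg => if_neg (by simpa using hg)
  | n + 1 => by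
    rw [pow_succ]
    exact conv_eq_zero_of_notMem (convPow_eq_zero_of_notMem hp n) hp

lemma isPMFOn_convPow (hp : IsPMFOn p s) : ∀ n, IsPMFOn (convPow p n) (s ^ n)
  | 0 => {
      nonneg := fun g => by simp only [convPow]; split_ifs <;> norm_num
      eq_zero_of_notMem := convPow_eq_zero_of_notMem hp.eq_zero_of_notMem 0
      sum_eq_one := by simp [convPow, ← Finset.singleton_one] }
  | n + 1 => by
    rw [pow_succ]
    exact isPMFOn_conv (isPMFOn_convPow hp n) hp

lemma convPow_add (hp : ∀ g ∉ s, p g = 0) (m n : ℕ) :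
    convPow p (m + n) = conv (convPow p m) (convPow p n) := by
  induction n with
  | zero => exact (conv_convPow_zero _ _).symm
  | succ n ih =>
    change conv (convPow p (m + n)) p = conv (convPow p m) (conv (convPow p n) p)
    rw [ih, conv_assoc (convPow_eq_zero_of_notMem hp m) (convPow_eq_zero_of_notMem hp n)]

lemma IsPMFOn.Hent_conv_le (hp : IsPMFOn p s) (hq : IsPMFOn q t) :
    Hent (conv p q) ≤ Hent p + Hent q := calc
  Hent (conv p q) = ∑ g ∈ s * t, negMulLog (∑ a ∈ s, p a * q (a⁻¹ * g)) := by
    rw [Hent_eq_sum (isPMFOn_conv hp hq).eq_zero_of_notMem]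
    simp only [conv_apply_eq_sum hp.eq_zero_of_notMem]
  _ ≤ ∑ g ∈ s * t, ∑ a ∈ s, negMulLog (p a * q (a⁻¹ * g)) :=
    Finset.sum_le_sum fun g _ =>
      negMulLog_sum_le s fun a _ => mul_nonneg (hp.nonneg a) (hq.nonneg _)
  _ = ∑ a ∈ s, ∑ b ∈ t, negMulLog (p a * q b) := by
    rw [Finset.sum_comm]
    refine Finset.sum_congr rfl fun a ha => ?_
    exact sum_comp_inv_mul_of_mem (F := fun b => negMulLog (p a * q b))
      (fun b hb => by simp [hq.eq_zero_of_notMem b hb]) ha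
  _ = Hent p + Hent q := sum_sum_negMulLog_mul hp hq

lemma IsPMFOn.subadditive_Hent_convPow (hp : IsPMFOn p s) :
    Subadditive fun n => Hent (convPow p n) := fun m n => by
  dsimp only
  rw [convPow_add hp.eq_zero_of_notMem]
  exact (isPMFOn_convPow hp m).Hent_conv_le (isPMFOn_convPow hp n)

lemma IsPMFOn.exists_tendsto_Hent_convPow_div (hp : IsPMFOn p s) :
    ∃ h, Tendsto (fun n : ℕ => Hent (convPow p n) / n) atTop (𝓝 h) :=
  ⟨_, hp.subadditive_Hent_convPow.tendsto_lim ⟨0, Set.forall_mem_range.2 fun n =>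
    div_nonneg (isPMFOn_convPow hp n).Hent_nonneg n.cast_nonneg⟩⟩

end Convolution

section Prod

variable {G L : Type*}

lemma mul_eq_zero_of_notMem_product {a : G → ℝ} {b : L → ℝ} {s : Finset G} {t : Finset L}
    (ha : ∀ g ∉ s, a g = 0) (hb : ∀ l ∉ t, b l = 0) :
    ∀ x ∉ s ×ˢ t, a x.1 * b x.2 = 0 := by
  intro x hx
  by_cases h₁ : x.1 ∈ s
  · rw [hb x.2 fun h₂ => hx (Finset.mem_product.2 ⟨h₁, h₂⟩), mul_zero]
  · rw [ha x.1 h₁, zero_mul]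

lemma Hent_prod {a : G → ℝ} {b : L → ℝ} {s : Finset G} {t : Finset L}
    (ha : IsPMFOn a s) (hb : IsPMFOn b t) :
    Hent (fun x : G × L => a x.1 * b x.2) = Hent a + Hent b := by
  rw [Hent_eq_sum (mul_eq_zero_of_notMem_product ha.eq_zero_of_notMem hb.eq_zero_of_notMem),
    Finset.sum_product, sum_sum_negMulLog_mul ha hb]

variable [Group G] [Group L]

lemma conv_prod {a c : G → ℝ} {b d : L → ℝ} {s : Finset G} {t : Finset L}
    (ha : ∀ g ∉ s, a g = 0) (hb : ∀ l ∉ t, b l = 0) :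
    conv (fun x : G × L => a x.1 * b x.2) (fun x => c x.1 * d x.2) =
      fun x => conv a c x.1 * conv b d x.2 := by
  funext x
  rw [conv_apply_eq_sum (mul_eq_zero_of_notMem_product ha hb), conv_apply_eq_sum ha,
    conv_apply_eq_sum hb, Finset.sum_mul_sum, Finset.sum_product]
  refine Finset.sum_congr rfl fun g _ => Finset.sum_congr rfl fun l _ => ?_
  simp only [Prod.fst_mul, Prod.snd_mul, Prod.fst_inv, Prod.snd_inv]
  ring

variable [DecidableEq G] [DecidableEq L]

lemma convPow_prod {a : G → ℝ} {b : L → ℝ} {s : Finset G} {t : Finset L}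
    (ha : ∀ g ∉ s, a g = 0) (hb : ∀ l ∉ t, b l = 0) (n : ℕ) :
    convPow (fun x : G × L => a x.1 * b x.2) n = fun x => convPow a n x.1 * convPow b n x.2 := by
  induction n with
  | zero =>
    funext x
    by_cases h₁ : x.1 = 1 <;> by_cases h₂ : x.2 = 1 <;> simp [convPow, Prod.ext_iff, h₁, h₂]
  | succ n ih =>
    change conv (convPow _ n) _ = _
    rw [ih]
    exact conv_prod (convPow_eq_zero_of_notMem ha n) (convPow_eq_zero_of_notMem hb n)

lemma tendsto_Hent_convPow_prod {a : G → ℝ} {b : L → ℝ} {s : Finset G} {t : Finset L}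
    (ha : IsPMFOn a s) (hb : IsPMFOn b t) {A B : ℝ}
    (hA : Tendsto (fun n : ℕ => Hent (convPow a n) / n) atTop (𝓝 A))
    (hB : Tendsto (fun n : ℕ => Hent (convPow b n) / n) atTop (𝓝 B)) :
    Tendsto (fun n : ℕ => Hent (convPow (fun x : G × L => a x.1 * b x.2) n) / n) atTop
      (𝓝 (A + B)) := by
  refine (hA.add hB).congr fun n => ?_
  rw [convPow_prod ha.eq_zero_of_notMem hb.eq_zero_of_notMem,
    Hent_prod (isPMFOn_convPow ha n) (isPMFOn_convPow hb n), add_div]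

end Prod

section FreeGroup

variable {α : Type*} [DecidableEq α]

lemma norm_mul_mk_singleton (g : FreeGroup α) {x : α × Bool}
    (hx : ∀ y ∈ g.toWord.getLast?, y.1 = x.1 → y.2 = x.2) :
    (g * mk [x]).norm = g.norm + 1 := by
  have hred : IsReduced (g.toWord ++ [x]) :=
    List.isChain_append.2 ⟨isReduced_toWord, IsReduced.singleton, by simpa using hx⟩
  rw [FreeGroup.norm, toWord_mul, toWord_mk, reduce_singleton, hred.reduce_eq,
    List.length_append, List.length_singleton, FreeGroup.norm]

/-- Only the letter cancelling the last letter of `g` can bring `g` closer to `1`. -/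
lemma exists_forall_ne_norm_mul_mk_singleton [Nonempty α] (g : FreeGroup α) :
    ∃ y : α × Bool, ∀ x ≠ y, (g * mk [x]).norm = g.norm + 1 := by
  cases h : g.toWord.getLast? with
  | none => exact ⟨Classical.arbitrary _, fun x _ => norm_mul_mk_singleton g (by simp [h])⟩
  | some z =>
    refine ⟨(z.1, !z.2), fun x hx => norm_mul_mk_singleton g ?_⟩
    simp only [h, Option.mem_def, Option.some.injEq, forall_eq']
    intro h₁
    by_contra h₂
    exact hx (Prod.ext h₁.symm (by grind))

lemma norm_le_norm_mul_mk_singleton_add_one (g : FreeGroup α) (x : α × Bool) :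
    g.norm ≤ (g * mk [x]).norm + 1 := calc
  g.norm = (g * mk [x] * (mk [x])⁻¹).norm := by rw [mul_inv_cancel_right]
  _ ≤ (g * mk [x]).norm + (mk [x])⁻¹.norm := norm_mul_le _ _
  _ ≤ (g * mk [x]).norm + 1 := by rw [norm_inv_eq]; gcongr; exact norm_mk_le

lemma exists_sum_comp_norm_mul_mk_singleton (g : FreeGroup (Fin 2)) (f : ℕ → ℝ) :
    ∃ m, g.norm ≤ m + 1 ∧
      ∑ x : Fin 2 × Bool, f (g * mk [x]).norm = f m + 3 * f (g.norm + 1) := by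
  obtain ⟨y, hy⟩ := exists_forall_ne_norm_mul_mk_singleton g
  refine ⟨_, norm_le_norm_mul_mk_singleton_add_one g y, ?_⟩
  rw [← Finset.add_sum_erase _ _ (Finset.mem_univ y),
    Finset.sum_congr rfl fun x hx => by rw [hy x (Finset.ne_of_mem_erase hx)]]
  simp [Finset.card_erase_of_mem]

end FreeGroup

section SimpleRandomWalk

def generatorsF2 : Finset (FreeGroup (Fin 2)) := Finset.univ.image fun x => mk [x]

lemma mem_generatorsF2 {g : FreeGroup (Fin 2)} :
    g ∈ generatorsF2 ↔ g = of 0 ∨ g = of 1 ∨ g = (of 0)⁻¹ ∨ g = (of 1)⁻¹ := by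
  have hof (i : Fin 2) : of i = mk [(i, true)] := rfl
  have hinv (i : Fin 2) : (mk [(i, true)])⁻¹ = mk [(i, false)] := rfl
  simp only [generatorsF2, Finset.mem_image, Finset.mem_univ, true_and, Prod.exists,
    Fin.exists_fin_two, Bool.exists_bool, hof, hinv, eq_comm (b := g)]
  tauto

lemma etaF2_apply_mk (x : Fin 2 × Bool) : etaF2 (mk [x]) = 1 / 4 :=
  if_pos (mem_generatorsF2.1 (Finset.mem_image_of_mem _ (Finset.mem_univ x)))

lemma etaF2_eq_zero_of_notMem {g : FreeGroup (Fin 2)} (hg : g ∉ generatorsF2) : etaF2 g = 0 :=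
  if_neg (mt mem_generatorsF2.2 hg)

lemma etaF2_inv (g : FreeGroup (Fin 2)) : etaF2 g⁻¹ = etaF2 g := by
  simp only [etaF2, inv_eq_iff_eq_inv, inv_inv]
  congr 1
  exact propext (by tauto)

lemma sum_etaF2_mul (f : FreeGroup (Fin 2) → ℝ) :
    ∑ s ∈ generatorsF2, etaF2 s * f s = (∑ x : Fin 2 × Bool, f (mk [x])) / 4 := by
  have hinj : Function.Injective fun x : Fin 2 × Bool => (mk [x] : FreeGroup (Fin 2)) :=
    fun x y h => by simpa using congrArg toWord h
  rw [generatorsF2, Finset.sum_image fun x _ y _ h => hinj h, Finset.sum_div]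
  exact Finset.sum_congr rfl fun x _ => by rw [etaF2_apply_mk]; ring

lemma tsum_etaF2_mul (f : FreeGroup (Fin 2) → ℝ) :
    ∑' s, etaF2 s * f s = (∑ x : Fin 2 × Bool, f (mk [x])) / 4 :=
  (tsum_eq_sum fun s hs => by rw [etaF2_eq_zero_of_notMem hs, zero_mul]).trans (sum_etaF2_mul f)

lemma isPMFOn_etaF2 : IsPMFOn etaF2 generatorsF2 where
  nonneg g := by unfold etaF2; split_ifs <;> norm_num
  eq_zero_of_notMem _ := etaF2_eq_zero_of_notMem
  sum_eq_one := by simpa using sum_etaF2_mul 1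

lemma conv_etaF2_apply (p : FreeGroup (Fin 2) → ℝ) (g : FreeGroup (Fin 2)) :
    conv p etaF2 g = (∑ x : Fin 2 × Bool, p (g * mk [x])) / 4 := by
  rw [conv, ← (Equiv.mulLeft g).tsum_eq]
  refine (tsum_congr fun k => ?_).trans (tsum_etaF2_mul fun k => p (g * k))
  rw [Equiv.coe_mulLeft, mul_inv_rev, inv_mul_cancel_right, etaF2_inv, mul_comm]

lemma convPow_etaF2_le (n : ℕ) (g : FreeGroup (Fin 2)) :
    convPow etaF2 n g ≤ (3⁻¹ : ℝ) ^ g.norm := by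
  induction n generalizing g with
  | zero =>
    simp only [convPow]
    split_ifs with hg
    · simp [hg]
    · positivity
  | succ n ih =>
    obtain ⟨m, hm, hsum⟩ := exists_sum_comp_norm_mul_mk_singleton g fun k => (3⁻¹ : ℝ) ^ k
    have hback : (3⁻¹ : ℝ) ^ m ≤ 3 * 3⁻¹ ^ g.norm := calc
      (3⁻¹ : ℝ) ^ m = 3 * 3⁻¹ ^ (m + 1) := by ring
      _ ≤ 3 * 3⁻¹ ^ g.norm := by
        gcongr 3 * ?_
        exact pow_le_pow_of_le_one (by norm_num) (by norm_num) hm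
    calc convPow etaF2 (n + 1) g = (∑ x : Fin 2 × Bool, convPow etaF2 n (g * mk [x])) / 4 :=
          conv_etaF2_apply _ g
      _ ≤ (∑ x : Fin 2 × Bool, (3⁻¹ : ℝ) ^ (g * mk [x]).norm) / 4 := by
          gcongr with x
          exact ih _
      _ ≤ (3⁻¹ : ℝ) ^ g.norm := by rw [hsum, pow_succ]; linarith

lemma norm_add_half_le_sum_etaF2_mul_norm (g : FreeGroup (Fin 2)) :
    g.norm + 1 / 2 ≤ ∑ s ∈ generatorsF2, etaF2 s * (g * s).norm := by
  rw [sum_etaF2_mul]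
  obtain ⟨m, hm, hsum⟩ := exists_sum_comp_norm_mul_mk_singleton g fun k => (k : ℝ)
  have hm' : (g.norm : ℝ) ≤ m + 1 := by exact_mod_cast hm
  rw [hsum]
  push_cast
  linarith

lemma half_le_sum_convPow_etaF2_mul_norm (n : ℕ) :
    (n : ℝ) / 2 ≤ ∑ g ∈ generatorsF2 ^ n, convPow etaF2 n g * g.norm := by
  induction n with
  | zero => simp [convPow]
  | succ n ih =>
    have hp := isPMFOn_convPow isPMFOn_etaF2 n
    calc ((n + 1 : ℕ) : ℝ) / 2 = n / 2 + 1 / 2 := by push_cast; ring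
      _ ≤ ∑ g ∈ generatorsF2 ^ n, convPow etaF2 n g * (g.norm + 1 / 2) := by
        rw [Finset.sum_congr rfl fun g _ => mul_add _ _ _, Finset.sum_add_distrib,
          ← Finset.sum_mul, hp.sum_eq_one]
        linarith
      _ ≤ ∑ g ∈ generatorsF2 ^ n, convPow etaF2 n g *
            ∑ s ∈ generatorsF2, etaF2 s * (g * s).norm := by
        gcongr with g
        · exact hp.nonneg g
        · exact norm_add_half_le_sum_etaF2_mul_norm g
      _ = _ := by
        rw [pow_succ]
        exact (sum_conv_mul hp.eq_zero_of_notMem isPMFOn_etaF2.eq_zero_of_notMem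
          fun g => (g.norm : ℝ)).symm

lemma half_mul_log_three_le_Hent_convPow_etaF2 (n : ℕ) :
    n / 2 * log 3 ≤ Hent (convPow etaF2 n) := by
  have hp := isPMFOn_convPow isPMFOn_etaF2 n
  rw [Hent_eq_sum hp.eq_zero_of_notMem]
  calc n / 2 * log 3 ≤ (∑ g ∈ generatorsF2 ^ n, convPow etaF2 n g * g.norm) * log 3 := by
        gcongr
        exact half_le_sum_convPow_etaF2_mul_norm n
    _ = ∑ g ∈ generatorsF2 ^ n, convPow etaF2 n g * (g.norm * log 3) := by
        simp only [Finset.sum_mul, mul_assoc]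
    _ ≤ _ := Finset.sum_le_sum fun g _ =>
        mul_mul_log_le_negMulLog (hp.nonneg g) (convPow_etaF2_le n g)

lemma exists_pos_tendsto_Hent_convPow_etaF2 :
    ∃ h, 0 < h ∧ Tendsto (fun n : ℕ => Hent (convPow etaF2 n) / n) atTop (𝓝 h) := by
  obtain ⟨h, hlim⟩ := isPMFOn_etaF2.exists_tendsto_Hent_convPow_div
  refine ⟨h, ?_, hlim⟩
  have hle : log 3 / 2 ≤ h := ge_of_tendsto hlim <| (eventually_gt_atTop 0).mono fun n hn => by
    rw [le_div_iff₀ (by exact_mod_cast hn)]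
    linarith [half_mul_log_three_le_Hent_convPow_etaF2 n]
  linarith [Real.log_pos (by norm_num : (1 : ℝ) < 3)]

end SimpleRandomWalk

end RandomWalkEntropy

open RandomWalkEntropy in
theorem stmt15_general {L : Type*} [Group L]
    (μ : L → ℝ) (μk : ℕ → L → ℝ) (hμ : IsPMF μ) (hμk : ∀ k, IsPMF (μk k))
    (F : Finset L) (hFμ : ∀ g, μ g ≠ 0 → g ∈ F) (hFμk : ∀ k g, μk k g ≠ 0 → g ∈ F)
    (hconv : ∀ g, Tendsto (fun k => μk k g) atTop (nhds (μ g)))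
    (hzero : ∀ k, Tendsto (fun n : ℕ => Hent (convPow (μk k) n) / n) atTop (nhds 0))
    (hμent : ℝ)
    (hμlim : Tendsto (fun n : ℕ => Hent (convPow μ n) / n) atTop (nhds hμent))
    (ν : FreeGroup (Fin 2) × L → ℝ) (hν : ∀ p, ν p = etaF2 p.1 * μ p.2)
    (νk : ℕ → FreeGroup (Fin 2) × L → ℝ) (hνk : ∀ k p, νk k p = etaF2 p.1 * μk k p.2) :
    (∀ p, Tendsto (fun k => νk k p) atTop (nhds (ν p))) ∧
    ∃ hη : ℝ, 0 < hη ∧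
      Tendsto (fun n : ℕ => Hent (convPow etaF2 n) / n) atTop (nhds hη) ∧
      (∀ k, Tendsto (fun n : ℕ => Hent (convPow (νk k) n) / n) atTop (nhds hη)) ∧
      Tendsto (fun n : ℕ => Hent (convPow ν n) / n) atTop (nhds (hη + hμent)) := by
  obtain ⟨hη, hηpos, hηlim⟩ := exists_pos_tendsto_Hent_convPow_etaF2
  obtain rfl : ν = fun p => etaF2 p.1 * μ p.2 := funext hν
  obtain rfl : νk = fun k p => etaF2 p.1 * μk k p.2 := funext fun k => funext (hνk k)
  refine ⟨fun p => (hconv p.2).const_mul _, hη, hηpos, hηlim, fun k => ?_, ?_⟩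
  · simpa using
      tendsto_Hent_convPow_prod isPMFOn_etaF2 ((hμk k).isPMFOn (hFμk k)) hηlim (hzero k)
  · exact tendsto_Hent_convPow_prod isPMFOn_etaF2 (hμ.isPMFOn hFμ) hηlim hμlim

/-- Discontinuity of asymptotic entropy with all asymptotic entropies strictly
positive: taking the product with a free group of rank 2 of a discontinuity
example where h(μ_k) = 0 and h(μ) > 0. -/
theorem stmt15 {L : Type*} [Group L] [Countable L]
    (μ : L → ℝ) (μk : ℕ → L → ℝ) (hμ : IsPMF μ) (hμk : ∀ k, IsPMF (μk k))
    (F : Finset L) (hFμ : ∀ g, μ g ≠ 0 → g ∈ F) (hFμk : ∀ k g, μk k g ≠ 0 → g ∈ F)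
    (hconv : ∀ g, Tendsto (fun k => μk k g) atTop (nhds (μ g)))
    (hzero : ∀ k, Tendsto (fun n : ℕ => Hent (convPow (μk k) n) / n) atTop (nhds 0))
    (hμent : ℝ) (hμpos : 0 < hμent)
    (hμlim : Tendsto (fun n : ℕ => Hent (convPow μ n) / n) atTop (nhds hμent))
    (ν : FreeGroup (Fin 2) × L → ℝ) (hν : ∀ p, ν p = etaF2 p.1 * μ p.2)
    (νk : ℕ → FreeGroup (Fin 2) × L → ℝ) (hνk : ∀ k p, νk k p = etaF2 p.1 * μk k p.2) :
    (∀ p, Tendsto (fun k => νk k p) atTop (nhds (ν p))) ∧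
    ∃ hη : ℝ, 0 < hη ∧
      Tendsto (fun n : ℕ => Hent (convPow etaF2 n) / n) atTop (nhds hη) ∧
      (∀ k, Tendsto (fun n : ℕ => Hent (convPow (νk k) n) / n) atTop (nhds hη)) ∧
      Tendsto (fun n : ℕ => Hent (convPow ν n) / n) atTop (nhds (hη + hμent)) :=
  stmt15_general μ μk hμ hμk F hFμ hFμk hconv hzero hμent hμlim ν hν νk hνk
end
end

section
/- Let G be a countable group and H ≤ G a finite-index subgroup. Let μ be a non-degenerate probability measure on G and let μ_H be the hitting measure on H: μ_H(h) = P(w_τ = h), where τ = min{n ≥ 1 : w_n ∈ H} is the first time the μ-random walk lies in H. Then μ_H is a probability measure on H (i.e., τ < ∞ almost surely), and the μ-random walk on G is transient if and only if the μ_H-random walk on H is transient. -/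
open Real Filter
open scoped ENNReal Classical

noncomputable section

/-- The hitting measure on a subgroup H: the law of the random walk at the first
positive time it lies in H. -/
def hitMeas {G : Type*} [Group G] (μ : G → ℝ) (H : Subgroup G) : G → ℝ := fun h =>
  ∑' n : ℕ, ∑' g : Fin (n + 1) → G,
    if (∀ m, 1 ≤ m → m ≤ n → walkProd g m ∉ H) ∧ walkProd g (n + 1) = h then
      ∏ i, μ (g i) else 0

/-!
All probabilities are computed in `ℝ≥0∞`, as masses of sets of finite sequences of increments, and
only converted to the real-valued convolution powers and hitting measure at the end.

Since `H` has finite index and `μ` is non-degenerate, there are `K` and `δ > 0` such that from any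
starting point the walk enters `H` within `K` steps with probability at least `δ`. Hence the
probability of avoiding `H` up to time `n` decays geometrically, and the hitting measure has total
mass one.

Cutting a path at its last visit to `H` before time `n` shows that the law of the position at the
`k`-th visit to `H` is the `k`-th convolution power of the hitting measure. Summing over `k` counts
every time at which the walk is at the identity exactly once, so the Green functions
`∑ₙ μ^{*n}(1)` and `∑ₖ μ_H^{*k}(1)` coincide.
-/

namespace RandomWalk

lemma exists_uniform_pos_of_finite {β : Type*} [Finite β] [Nonempty β] (F : β → ℕ → ℝ≥0∞)
    (hF : ∀ b, ∃ m, 1 ≤ m ∧ 0 < F b m) :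
    ∃ K : ℕ, ∃ δ > 0, ∀ b, ∃ m, 1 ≤ m ∧ m ≤ K ∧ δ ≤ F b m := by
  choose m hm1 hpos using hF
  obtain ⟨b₀, hb₀⟩ := Finite.exists_min fun b => F b (m b)
  obtain ⟨b₁, hb₁⟩ := Finite.exists_max m
  exact ⟨m b₁, F b₀ (m b₀), hpos b₀, fun b => ⟨m b, hm1 b, hb₁ b, hb₀ b⟩⟩

lemma tsum_eq_tsum_add_succ {M : Type*} [AddCommMonoid M] [TopologicalSpace M] {f : ℕ → M}
    (t : ℕ) (hf : ∀ n ≤ t, f n = 0) : ∑' n, f n = ∑' s, f (t + (s + 1)) := by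
  have hinj : Function.Injective fun s => t + (s + 1) := fun a b hab => by
    simp only at hab
    omega
  refine (hinj.tsum_eq fun n hn => ⟨n - (t + 1), ?_⟩).symm
  have : t < n := not_le.mp fun hle => hn (hf n hle)
  simp only
  omega

lemma summable_toReal_iff {ι : Type*} {f : ι → ℝ≥0∞} (hf : ∀ i, f i ≠ ⊤) :
    Summable (fun i => (f i).toReal) ↔ ∑' i, f i ≠ ⊤ := by
  lift f to ι → NNReal using hf
  simpa using ENNReal.tsum_coe_ne_top_iff_summable_coe.symm

section PathMass

variable {α : Type*} (p : α → ℝ≥0∞)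

def pathMass (n : ℕ) (S : (Fin n → α) → Prop) : ℝ≥0∞ :=
  ∑' g : Fin n → α, if S g then ∏ i, p (g i) else 0

variable {p}

lemma pathMass_mono {n : ℕ} {S T : (Fin n → α) → Prop} (h : ∀ g, S g → T g) :
    pathMass p n S ≤ pathMass p n T :=
  ENNReal.tsum_le_tsum fun g => by
    by_cases hS : S g
    · rw [if_pos hS, if_pos (h g hS)]
    · rw [if_neg hS]; exact zero_le

lemma pathMass_eq_zero {n : ℕ} {S : (Fin n → α) → Prop} (h : ∀ g, ¬ S g) :
    pathMass p n S = 0 :=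
  ENNReal.tsum_eq_zero.mpr fun g => if_neg (h g)

lemma pathMass_zero (S : (Fin 0 → α) → Prop) :
    pathMass p 0 S = if S Fin.elim0 then 1 else 0 := by
  rw [pathMass, tsum_eq_single Fin.elim0 fun g hg => (hg (Subsingleton.elim _ _)).elim]
  simp

lemma pathMass_one (S : (Fin 1 → α) → Prop) :
    pathMass p 1 S = ∑' x, if S (fun _ => x) then p x else 0 := by
  rw [pathMass, ← (Equiv.funUnique (Fin 1) α).symm.tsum_eq]
  refine tsum_congr fun x => ?_
  rw [Fin.prod_univ_one]
  rfl

lemma pathMass_or {n : ℕ} {S T : (Fin n → α) → Prop} (h : ∀ g, S g → ¬ T g) :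
    pathMass p n (fun g => S g ∨ T g) = pathMass p n S + pathMass p n T := by
  rw [pathMass, pathMass, pathMass, ← ENNReal.tsum_add]
  refine tsum_congr fun g => ?_
  by_cases hS : S g
  · simp [hS, h g hS]
  · simp [hS]

lemma pathMass_eq_tsum_of_existsUnique {β : Type*} {n : ℕ} {S : (Fin n → α) → Prop}
    {T : β → (Fin n → α) → Prop} (hT : ∀ y g, T y g → S g) (hS : ∀ g, S g → ∃! y, T y g) :
    pathMass p n S = ∑' y, pathMass p n (T y) := by
  simp only [pathMass]
  rw [ENNReal.tsum_comm]
  refine tsum_congr fun g => ?_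
  by_cases hSg : S g
  · obtain ⟨y, hy, huniq⟩ := hS g hSg
    rw [if_pos hSg, tsum_eq_single y fun z hz => if_neg fun hTz => hz (huniq z hTz), if_pos hy]
  · rw [if_neg hSg, eq_comm, ENNReal.tsum_eq_zero]
    exact fun y => if_neg fun hy => hSg (hT y g hy)

lemma pathMass_eq_tsum_fiber {β : Type*} {n : ℕ} (S : (Fin n → α) → Prop)
    (f : (Fin n → α) → β) :
    pathMass p n S = ∑' y, pathMass p n (fun g => S g ∧ f g = y) :=
  pathMass_eq_tsum_of_existsUnique (fun _ _ h => h.1)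
    fun g hS => ⟨f g, ⟨hS, rfl⟩, fun _ hy => hy.2.symm⟩

lemma pathMass_mem_eq_tsum {β σ : Type*} [SetLike σ β] {n : ℕ} (S : (Fin n → α) → Prop)
    (f : (Fin n → α) → β) (s : σ) :
    pathMass p n (fun g => S g ∧ f g ∈ s) = ∑' y : s, pathMass p n (fun g => S g ∧ f g = y) :=
  pathMass_eq_tsum_of_existsUnique (fun y _ h => ⟨h.1, h.2 ▸ y.2⟩)
    fun g hS => ⟨⟨f g, hS.2⟩, ⟨hS.1, rfl⟩, fun _ hy => Subtype.ext hy.2.symm⟩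

lemma tsum_pathMass_fiber_mul {β : Type*} {n : ℕ} (S : (Fin n → α) → Prop)
    (f : (Fin n → α) → β) (c : β → ℝ≥0∞) :
    ∑' y, pathMass p n (fun g => S g ∧ f g = y) * c y
      = ∑' g, (if S g then ∏ i, p (g i) else 0) * c (f g) := by
  simp only [pathMass, ← ENNReal.tsum_mul_right]
  rw [ENNReal.tsum_comm]
  refine tsum_congr fun g => ?_
  rw [tsum_eq_single (f g) fun y hy => by rw [if_neg fun h => hy h.2.symm, zero_mul]]
  by_cases hS : S g <;> simp [hS]

lemma pathMass_true (hp : ∑' x, p x = 1) (n : ℕ) : pathMass p n (fun _ => True) = 1 := by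
  induction n with
  | zero => simp [pathMass_zero]
  | succ n ih =>
    have h1 : pathMass p 1 (fun _ => True) = 1 := by simpa [pathMass_one] using hp
    simp only [pathMass, if_true] at ih h1 ⊢
    rw [← (Fin.appendEquiv n 1).tsum_eq]
    refine (ENNReal.tsum_prod (f := fun a b => ∏ i, p (Fin.append a b i))).trans ?_
    simp only [Fin.prod_univ_add, Fin.append_left, Fin.append_right, ENNReal.tsum_mul_left, h1,
      mul_one, ih]

lemma pathMass_le_one (hp : ∑' x, p x = 1) {n : ℕ} (S : (Fin n → α) → Prop) :
    pathMass p n S ≤ 1 :=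
  (pathMass_mono fun _ _ => trivial).trans (pathMass_true hp n).le

end PathMass

section Walk

variable {G : Type*} [Monoid G] {p : G → ℝ≥0∞}

lemma walkProd_zero {n : ℕ} (g : Fin n → G) : walkProd g 0 = 1 := by
  simp [walkProd]

lemma walkProd_one (g : Fin 1 → G) : walkProd g 1 = g 0 := by
  simp [walkProd]

lemma walkProd_append_left {n m j : ℕ} (a : Fin n → G) (b : Fin m → G) (hj : j ≤ n) :
    walkProd (Fin.append a b) j = walkProd a j := by
  rw [walkProd, walkProd, List.ofFn_fin_append, List.take_append_of_le_length (by simpa)]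

lemma walkProd_append_right {n m : ℕ} (a : Fin n → G) (b : Fin m → G) (j : ℕ) :
    walkProd (Fin.append a b) (n + j) = walkProd a n * walkProd b j := by
  simp [walkProd, List.ofFn_fin_append, List.take_append, List.take_of_length_le]

/-- The Markov property of the walk at time `n`. -/
lemma pathMass_append {n m : ℕ} {S : (Fin (n + m) → G) → Prop} (A : (Fin n → G) → Prop)
    (B : G → (Fin m → G) → Prop) (hS : ∀ a b, S (Fin.append a b) ↔ A a ∧ B (walkProd a n) b) :
    pathMass p (n + m) S
      = ∑' y, pathMass p n (fun a => A a ∧ walkProd a n = y) * pathMass p m (B y) := by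
  rw [tsum_pathMass_fiber_mul, pathMass, ← (Fin.appendEquiv n m).tsum_eq]
  refine (ENNReal.tsum_prod (f := fun a b =>
    if S (Fin.append a b) then ∏ i, p (Fin.append a b i) else 0)).trans (tsum_congr fun a => ?_)
  rw [pathMass, ← ENNReal.tsum_mul_left]
  refine tsum_congr fun b => ?_
  simp only [hS, Fin.prod_univ_add, Fin.append_left, Fin.append_right]
  by_cases hA : A a <;> by_cases hB : B (walkProd a n) b <;> simp [hA, hB]

lemma pathMass_append_of_left {n m : ℕ} {S : (Fin (n + m) → G) → Prop} (A : (Fin n → G) → Prop)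
    (hp : ∑' x, p x = 1) (hS : ∀ a b, S (Fin.append a b) ↔ A a) :
    pathMass p (n + m) S = pathMass p n A := by
  rw [pathMass_append A (fun _ _ => True) (by simpa using hS),
    pathMass_eq_tsum_fiber A (walkProd · n)]
  simp only [pathMass_true hp, mul_one]

end Walk

section WalkLaw

variable {G : Type*} [Group G] {p : G → ℝ≥0∞}

variable (p) in
def walkLaw (n : ℕ) (x : G) : ℝ≥0∞ :=
  pathMass p n (fun g => walkProd g n = x)

lemma walkLaw_zero (x : G) : walkLaw p 0 x = if x = 1 then 1 else 0 := by
  simp [walkLaw, pathMass_zero, walkProd_zero, eq_comm]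

lemma walkLaw_succ (n : ℕ) (x : G) :
    walkLaw p (n + 1) x = ∑' y, walkLaw p n y * p (y⁻¹ * x) := by
  rw [walkLaw, pathMass_append (fun _ => True) (fun y b => y * b 0 = x)
    fun a b => by rw [walkProd_append_right, walkProd_one, true_and]]
  refine tsum_congr fun y => ?_
  simp only [true_and, pathMass_one, ← eq_inv_mul_iff_mul_eq, tsum_ite_eq]
  rfl

lemma walkLaw_le_one (hp : ∑' x, p x = 1) (n : ℕ) (x : G) : walkLaw p n x ≤ 1 :=
  pathMass_le_one hp _

lemma convPow_toReal (hp : ∑' x, p x = 1) (n : ℕ) (x : G) :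
    convPow (fun g => (p g).toReal) n x = (walkLaw p n x).toReal := by
  induction n generalizing x with
  | zero => simp [convPow, walkLaw_zero, apply_ite ENNReal.toReal]
  | succ n ih =>
    have hp_ne_top : ∀ g, p g ≠ ⊤ := fun g =>
      ne_top_of_le_ne_top ENNReal.one_ne_top (hp ▸ ENNReal.le_tsum g)
    simp only [convPow, conv, ih, walkLaw_succ, ← ENNReal.toReal_mul]
    exact (ENNReal.tsum_toReal_eq fun y => ENNReal.mul_ne_top
      (ne_top_of_le_ne_top ENNReal.one_ne_top (walkLaw_le_one hp n y)) (hp_ne_top _)).symm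

end WalkLaw

section Hitting

variable {G : Type*} [Group G] {p : G → ℝ≥0∞} {H : Subgroup G}

variable (p H) in
def avoidMass (x : G) (n : ℕ) : ℝ≥0∞ :=
  pathMass p n (fun g => ∀ m, 1 ≤ m → m ≤ n → x * walkProd g m ∉ H)

variable (p H) in
def firstHitLaw (n : ℕ) (x : G) : ℝ≥0∞ :=
  pathMass p (n + 1)
    (fun g => (∀ m, 1 ≤ m → m ≤ n → walkProd g m ∉ H) ∧ walkProd g (n + 1) = x)

variable (p H) in
def hitLaw (x : G) : ℝ≥0∞ :=
  ∑' n, firstHitLaw p H n x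

lemma avoidMass_zero (x : G) : avoidMass p H x 0 = 1 := by
  simp only [avoidMass, pathMass_zero]
  exact if_pos fun m h1 h0 => by omega

lemma avoidMass_eq_avoidMass_succ_add (hp : ∑' x, p x = 1) (n : ℕ) :
    avoidMass p H 1 n = avoidMass p H 1 (n + 1) + ∑' h : H, firstHitLaw p H n h := by
  have hext : avoidMass p H 1 n
      = pathMass p (n + 1) (fun g => ∀ m, 1 ≤ m → m ≤ n → walkProd g m ∉ H) := by
    refine (pathMass_append_of_left _ hp fun a b => ?_).symm
    refine forall₂_congr fun m _ => imp_congr_right fun hm => ?_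
    rw [walkProd_append_left a b hm, one_mul]
  simp only [firstHitLaw]
  rw [hext, avoidMass, ← pathMass_mem_eq_tsum _ (walkProd · (n + 1)) H, ← pathMass_or]
  · congr 1; funext g
    simp only [one_mul]
    refine propext ⟨fun h => ?_, ?_⟩
    · by_cases hn : walkProd g (n + 1) ∈ H
      · exact Or.inr ⟨h, hn⟩
      · refine Or.inl fun m h1 hm => ?_
        rcases Nat.lt_or_eq_of_le hm with hlt | rfl
        exacts [h m h1 (by omega), hn]
    · rintro (h | ⟨h, -⟩)
      exacts [fun m h1 hm => h m h1 (by omega), h]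
  · exact fun g h h' => h (n + 1) (by omega) le_rfl (by rw [one_mul]; exact h'.2)

lemma avoidMass_add_sum_firstHitLaw (hp : ∑' x, p x = 1) (N : ℕ) :
    avoidMass p H 1 N + ∑ n ∈ Finset.range N, ∑' h : H, firstHitLaw p H n h = 1 := by
  induction N with
  | zero => simp [avoidMass_zero]
  | succ N ih =>
    rw [Finset.sum_range_succ, ← ih, avoidMass_eq_avoidMass_succ_add hp N]
    ring

lemma avoidMass_le_one_sub (hp : ∑' x, p x = 1) {m K : ℕ} (hm : 1 ≤ m) (hmK : m ≤ K) (x : G) :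
    avoidMass p H x K ≤ 1 - pathMass p m (fun g => x * walkProd g m ∈ H) := by
  obtain ⟨r, rfl⟩ := Nat.exists_eq_add_of_le hmK
  have hhit : pathMass p (m + r) (fun g => x * walkProd g m ∈ H)
      = pathMass p m (fun g => x * walkProd g m ∈ H) :=
    pathMass_append_of_left _ hp fun a b => by rw [walkProd_append_left a b le_rfl]
  rw [← hhit]
  refine ENNReal.le_sub_of_add_le_right (ne_top_of_le_ne_top ENNReal.one_ne_top
    (pathMass_le_one hp _)) ?_
  rw [avoidMass, ← pathMass_or fun g h => h m hm (by omega)]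
  exact pathMass_le_one hp _

lemma exists_avoidMass_le [H.FiniteIndex] (hp : ∑' x, p x = 1)
    (hnd : ∀ x : G, ∃ n, 1 ≤ n ∧ 0 < walkLaw p n x) :
    ∃ K : ℕ, ∃ δ > 0, ∀ x, avoidMass p H x K ≤ 1 - δ := by
  -- `x * w ∈ H` only depends on the coset `x⁻¹ H`, of which there are finitely many.
  obtain ⟨K, δ, hδ, hK⟩ := exists_uniform_pos_of_finite
    (fun (c : G ⧸ H) m => pathMass p m (fun g => c.out⁻¹ * walkProd g m ∈ H)) fun c => by
      obtain ⟨n, hn, hpos⟩ := hnd c.out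
      exact ⟨n, hn, hpos.trans_le (pathMass_mono fun g hg => by simp [hg])⟩
  refine ⟨K, δ, hδ, fun x => ?_⟩
  obtain ⟨m, hm, hmK, hδm⟩ := hK (x⁻¹ : G)
  set y := ((x⁻¹ : G) : G ⧸ H).out
  have hcoset : y⁻¹ * x⁻¹ ∈ H := QuotientGroup.eq.mp (QuotientGroup.out_eq' _)
  calc avoidMass p H x K ≤ 1 - pathMass p m (fun g => x * walkProd g m ∈ H) :=
        avoidMass_le_one_sub hp hm hmK x
    _ ≤ 1 - δ := by
        refine tsub_le_tsub_left (hδm.trans_eq ?_) 1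
        congr 1; funext g
        rw [show y⁻¹ * walkProd g m = (y⁻¹ * x⁻¹) * (x * walkProd g m) by group,
          H.mul_mem_cancel_left hcoset]

lemma avoidMass_add_le {K : ℕ} {c : ℝ≥0∞} (hK : ∀ y, avoidMass p H y K ≤ c) (x : G) (n : ℕ) :
    avoidMass p H x (n + K) ≤ avoidMass p H x n * c := by
  rw [avoidMass, pathMass_append (fun a => ∀ m, 1 ≤ m → m ≤ n → x * walkProd a m ∉ H)
    (fun y b => ∀ j, 1 ≤ j → j ≤ K → x * y * walkProd b j ∉ H) fun a b => ?_,
    avoidMass, pathMass_eq_tsum_fiber _ (walkProd · n), ← ENNReal.tsum_mul_right]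
  · exact ENNReal.tsum_le_tsum fun y => by gcongr; exact hK (x * y)
  · constructor
    · intro h
      refine ⟨fun m h1 hm => ?_, fun j h1 hj => ?_⟩
      · rw [← walkProd_append_left a b hm]
        exact h m h1 (by omega)
      · rw [mul_assoc, ← walkProd_append_right]
        exact h (n + j) (by omega) (by omega)
    · rintro ⟨ha, hb⟩ m h1 hm
      rcases le_or_gt m n with hle | hlt
      · rw [walkProd_append_left a b hle]
        exact ha m h1 hle
      · obtain ⟨j, rfl⟩ := Nat.exists_eq_add_of_lt hlt
        rw [add_assoc, walkProd_append_right, ← mul_assoc]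
        exact hb (j + 1) (by omega) (by omega)

lemma avoidMass_mul_le_pow {K : ℕ} {c : ℝ≥0∞} (hK : ∀ y, avoidMass p H y K ≤ c) (x : G)
    (k : ℕ) : avoidMass p H x (k * K) ≤ c ^ k := by
  induction k with
  | zero => rw [zero_mul, avoidMass_zero, pow_zero]
  | succ k ih =>
    rw [Nat.succ_mul, pow_succ]
    exact (avoidMass_add_le hK x _).trans (by gcongr)

lemma iInf_avoidMass_eq_zero [H.FiniteIndex] (hp : ∑' x, p x = 1)
    (hnd : ∀ x : G, ∃ n, 1 ≤ n ∧ 0 < walkLaw p n x) : ⨅ n, avoidMass p H 1 n = 0 := by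
  obtain ⟨K, δ, hδ, hK⟩ := exists_avoidMass_le (H := H) hp hnd
  have hlt : 1 - δ < 1 := ENNReal.sub_lt_self ENNReal.one_ne_top one_ne_zero hδ.ne'
  refine le_antisymm (ge_of_tendsto' (ENNReal.tendsto_pow_atTop_nhds_zero_of_lt_one hlt)
    fun k => iInf_le_of_le (k * K) (avoidMass_mul_le_pow hK 1 k)) zero_le

lemma tsum_hitLaw [H.FiniteIndex] (hp : ∑' x, p x = 1)
    (hnd : ∀ x : G, ∃ n, 1 ≤ n ∧ 0 < walkLaw p n x) : ∑' h : H, hitLaw p H h = 1 := by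
  have hpartial : ∀ N, ∑ n ∈ Finset.range N, ∑' h : H, firstHitLaw p H n h
      = 1 - avoidMass p H 1 N := fun N =>
    ENNReal.eq_sub_of_add_eq (ne_top_of_le_ne_top ENNReal.one_ne_top (pathMass_le_one hp _))
      ((add_comm _ _).trans (avoidMass_add_sum_firstHitLaw hp N))
  simp only [hitLaw]
  rw [ENNReal.tsum_comm, ENNReal.tsum_eq_iSup_nat]
  simp only [hpartial, ← ENNReal.sub_iInf, iInf_avoidMass_eq_zero hp hnd, tsub_zero]

end Hitting

section Visits

variable {G : Type*} [Group G] {p : G → ℝ≥0∞} {H : Subgroup G}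

variable (H) in
def visits {n : ℕ} (g : Fin n → G) (t : ℕ) : ℕ :=
  ((Finset.Icc 1 t).filter fun m => walkProd g m ∈ H).card

variable (H) in
def IsLastVisit {n : ℕ} (g : Fin n → G) (t : ℕ) : Prop :=
  t < n ∧ walkProd g t ∈ H ∧ ∀ m, t < m → m < n → walkProd g m ∉ H

lemma visits_zero {n : ℕ} (g : Fin n → G) : visits H g 0 = 0 := by
  simp [visits]

lemma visits_pos {n : ℕ} (g : Fin n → G) (hn : 0 < n) (hg : walkProd g n ∈ H) :
    0 < visits H g n :=
  Finset.card_pos.mpr ⟨n, Finset.mem_filter.mpr ⟨Finset.mem_Icc.mpr ⟨hn, le_rfl⟩, hg⟩⟩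

lemma visits_append_left {n m j : ℕ} (a : Fin n → G) (b : Fin m → G) (hj : j ≤ n) :
    visits H (Fin.append a b) j = visits H a j := by
  unfold visits
  congr 1
  refine Finset.filter_congr fun i hi => ?_
  rw [walkProd_append_left a b ((Finset.mem_Icc.mp hi).2.trans hj)]

lemma exists_isLastVisit {n : ℕ} (g : Fin n → G) (hn : 0 < n) : ∃ t, IsLastVisit H g t := by
  set t := Nat.findGreatest (fun m => walkProd g m ∈ H) (n - 1)
  refine ⟨t, by have := Nat.findGreatest_le (P := fun m => walkProd g m ∈ H) (n - 1); omega,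
    Nat.findGreatest_spec (P := fun m => walkProd g m ∈ H) (Nat.zero_le _)
      (by rw [walkProd_zero]; exact H.one_mem),
    fun m htm hmn => Nat.findGreatest_is_greatest htm (by omega)⟩

lemma IsLastVisit.eq {n : ℕ} {g : Fin n → G} {t t' : ℕ} (ht : IsLastVisit H g t)
    (ht' : IsLastVisit H g t') : t = t' := by
  by_contra hne
  rcases Nat.lt_or_gt_of_ne hne with hlt | hlt
  exacts [ht.2.2 t' hlt ht'.1 ht'.2.1, ht'.2.2 t hlt ht.1 ht.2.1]

lemma IsLastVisit.visits_eq {n : ℕ} {g : Fin n → G} {t : ℕ} (ht : IsLastVisit H g t)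
    (hg : walkProd g n ∈ H) : visits H g n = visits H g t + 1 := by
  obtain ⟨htn, -, hno⟩ := ht
  have hfilter : (Finset.Icc 1 n).filter (fun m => walkProd g m ∈ H)
      = insert n ((Finset.Icc 1 t).filter fun m => walkProd g m ∈ H) := by
    ext m
    simp only [Finset.mem_insert, Finset.mem_filter, Finset.mem_Icc]
    constructor
    · rintro ⟨⟨h1, hmn⟩, hm⟩
      rcases hmn.lt_or_eq with hlt | rfl
      · exact Or.inr ⟨⟨h1, not_lt.mp fun htm => hno m htm hlt hm⟩, hm⟩
      · exact Or.inl rfl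
    · rintro (rfl | ⟨⟨h1, hmt⟩, hm⟩)
      exacts [⟨⟨by omega, le_rfl⟩, hg⟩, ⟨⟨h1, by omega⟩, hm⟩]
  rw [visits, visits, hfilter, Finset.card_insert_of_notMem fun hmem => by
    simp only [Finset.mem_filter, Finset.mem_Icc] at hmem; omega]

-- For `h ∈ H` at most one time `n` contributes, the time of the `k`-th visit to `H`.
variable (p H) in
def kthVisitLaw (k : ℕ) (h : H) : ℝ≥0∞ :=
  ∑' n, pathMass p n (fun g => visits H g n = k ∧ walkProd g n = h)

lemma kthVisitLaw_zero (h : H) : kthVisitLaw p H 0 h = if h = 1 then 1 else 0 := by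
  rw [kthVisitLaw, tsum_eq_single 0 fun n hn => pathMass_eq_zero fun g ⟨hv, hg⟩ =>
    (visits_pos g (Nat.pos_of_ne_zero hn) (hg ▸ h.2)).ne' hv]
  simp [pathMass_zero, visits_zero, walkProd_zero, eq_comm]

lemma pathMass_visits_succ (k : ℕ) (h : H) (n : ℕ) :
    pathMass p n (fun g => visits H g n = k + 1 ∧ walkProd g n = h)
      = ∑' t, pathMass p n (fun g => visits H g t = k ∧ IsLastVisit H g t ∧ walkProd g n = h) :=
  pathMass_eq_tsum_of_existsUnique
    (fun t g ⟨hv, ht, hg⟩ => ⟨by rw [ht.visits_eq (hg ▸ h.2), hv], hg⟩)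
    fun g ⟨hv, hg⟩ => by
      have hn : 0 < n := Nat.pos_of_ne_zero fun hn => by subst hn; simp [visits_zero] at hv
      obtain ⟨t, ht⟩ := exists_isLastVisit (H := H) g hn
      refine ⟨t, ⟨?_, ht, hg⟩, fun t' ht' => ht'.2.1.eq ht⟩
      have := ht.visits_eq (hg ▸ h.2)
      omega

lemma pathMass_lastVisit_eq_tsum (k : ℕ) (h : H) (t s : ℕ) :
    pathMass p (t + (s + 1))
      (fun g => visits H g t = k ∧ IsLastVisit H g t ∧ walkProd g (t + (s + 1)) = h)
      = ∑' h' : H, pathMass p t (fun a => visits H a t = k ∧ walkProd a t = h')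
          * firstHitLaw p H s ((h' : G)⁻¹ * h) := by
  rw [pathMass_append (fun a => visits H a t = k ∧ walkProd a t ∈ H)
    (fun y b => (∀ j, 1 ≤ j → j ≤ s → y * walkProd b j ∉ H) ∧ y * walkProd b (s + 1) = h)
    fun a b => ?_]
  · have hsupp : Function.support (fun y => pathMass p t
        (fun a => (visits H a t = k ∧ walkProd a t ∈ H) ∧ walkProd a t = y)
          * pathMass p (s + 1) (fun b => (∀ j, 1 ≤ j → j ≤ s → y * walkProd b j ∉ H)
            ∧ y * walkProd b (s + 1) = h)) ⊆ H :=
      Function.support_subset_iff'.mpr fun y hy => by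
        rw [pathMass_eq_zero, zero_mul]
        rintro a ⟨⟨-, hmem⟩, rfl⟩
        exact hy hmem
    refine (tsum_subtype_eq_of_support_subset hsupp).symm.trans (tsum_congr fun h' => ?_)
    congr 2
    · funext a
      exact propext ⟨fun ⟨⟨hv, _⟩, hw⟩ => ⟨hv, hw⟩, fun ⟨hv, hw⟩ => ⟨⟨hv, hw ▸ h'.2⟩, hw⟩⟩
    · funext b
      simp only [H.mul_mem_cancel_left h'.2, ← eq_inv_mul_iff_mul_eq]
  · simp only [IsLastVisit, visits_append_left a b le_rfl, walkProd_append_left a b le_rfl,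
      walkProd_append_right]
    have hgap : (∀ m, t < m → m < t + (s + 1) → walkProd (Fin.append a b) m ∉ H)
        ↔ ∀ j, 1 ≤ j → j ≤ s → walkProd a t * walkProd b j ∉ H := by
      refine ⟨fun hm j h1 hj => ?_, fun hj m htm hms => ?_⟩
      · rw [← walkProd_append_right]
        exact hm _ (by omega) (by omega)
      · obtain ⟨j, rfl⟩ := Nat.exists_eq_add_of_lt htm
        rw [add_assoc, walkProd_append_right]
        exact hj _ (by omega) (by omega)
    rw [hgap]
    have : t < t + (s + 1) := by omega
    tauto

lemma kthVisitLaw_succ (k : ℕ) (h : H) :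
    kthVisitLaw p H (k + 1) h = ∑' h' : H, kthVisitLaw p H k h' * hitLaw p H ((h' : G)⁻¹ * h) := by
  have hshift : ∀ t, ∑' n, pathMass p n
      (fun g => visits H g t = k ∧ IsLastVisit H g t ∧ walkProd g n = h)
      = ∑' s, pathMass p (t + (s + 1))
          (fun g => visits H g t = k ∧ IsLastVisit H g t ∧ walkProd g (t + (s + 1)) = h) :=
    fun t => tsum_eq_tsum_add_succ (M := ℝ≥0∞) t fun n hn => pathMass_eq_zero fun g hg => by
      have := hg.2.1.1
      omega
  simp only [kthVisitLaw, hitLaw, pathMass_visits_succ]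
  rw [ENNReal.tsum_comm]
  simp only [hshift, pathMass_lastVisit_eq_tsum, ← ENNReal.tsum_mul_left, ← ENNReal.tsum_mul_right]
  conv_lhs => enter [1, t]; rw [ENNReal.tsum_comm]
  rw [ENNReal.tsum_comm]
  exact tsum_congr fun h' => ENNReal.tsum_comm

lemma walkLaw_hitLaw_eq_kthVisitLaw (k : ℕ) (h : H) :
    walkLaw (fun h : H => hitLaw p H h) k h = kthVisitLaw p H k h := by
  induction k generalizing h with
  | zero => rw [walkLaw_zero, kthVisitLaw_zero]; congr
  | succ k ih =>
    rw [walkLaw_succ, kthVisitLaw_succ]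
    simp only [ih, Subgroup.coe_mul, Subgroup.coe_inv]

lemma tsum_kthVisitLaw_one : ∑' k, kthVisitLaw p H k 1 = ∑' n, walkLaw p n 1 := by
  simp only [kthVisitLaw, walkLaw]
  rw [ENNReal.tsum_comm]
  refine tsum_congr fun n => ?_
  rw [pathMass_eq_tsum_fiber (fun g => walkProd g n = 1) (visits H · n)]
  simp only [OneMemClass.coe_one, and_comm]

end Visits

lemma tsum_ofReal_eq_one {α : Type*} {μ : α → ℝ} (hμ : IsPMF μ) :
    ∑' x, ENNReal.ofReal (μ x) = 1 := by
  have hsum : Summable μ := by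
    by_contra h
    simpa [tsum_eq_zero_of_not_summable h] using hμ.2
  rw [← ENNReal.ofReal_tsum_of_nonneg hμ.1 hsum, hμ.2, ENNReal.ofReal_one]

lemma toReal_pathMass_ofReal {α : Type*} {μ : α → ℝ} (hμ : ∀ x, 0 ≤ μ x) {n : ℕ}
    (S : (Fin n → α) → Prop) {_ : DecidablePred S} :
    (pathMass (fun x => ENNReal.ofReal (μ x)) n S).toReal
      = ∑' g : Fin n → α, if S g then ∏ i, μ (g i) else 0 := by
  rw [pathMass, ENNReal.tsum_toReal_eq fun g => by
    split_ifs
    exacts [ENNReal.prod_ne_top fun _ _ => ENNReal.ofReal_ne_top, ENNReal.zero_ne_top]]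
  refine tsum_congr fun g => ?_
  split_ifs <;> simp [ENNReal.toReal_prod, ENNReal.toReal_ofReal (hμ _)]

lemma hitMeas_eq_toReal {G : Type*} [Group G] {μ : G → ℝ} (hμ : IsPMF μ) (H : Subgroup G)
    (x : G) : hitMeas μ H x = (hitLaw (fun g => ENNReal.ofReal (μ g)) H x).toReal := by
  rw [hitMeas, hitLaw, ENNReal.tsum_toReal_eq (f := fun n => firstHitLaw _ H n x)
    fun n => ne_top_of_le_ne_top ENNReal.one_ne_top (pathMass_le_one (tsum_ofReal_eq_one hμ) _)]
  exact tsum_congr fun n => (toReal_pathMass_ofReal hμ.1 _).symm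

end RandomWalk

open RandomWalk

theorem stmt16_general {G : Type*} [Group G] (H : Subgroup G) [H.FiniteIndex]
    (μ : G → ℝ) (hμ : IsPMF μ)
    (hnd : ∀ g : G, ∃ n : ℕ, 1 ≤ n ∧ 0 < convPow μ n g) :
    (∑' h : H, hitMeas μ H (h : G)) = 1 ∧
      (Summable (fun n : ℕ => convPow μ n (1 : G)) ↔
        Summable (fun n : ℕ => convPow (fun h : H => hitMeas μ H (h : G)) n (1 : H))) := by
  simp only [hitMeas_eq_toReal hμ]
  set p : G → ℝ≥0∞ := fun g => ENNReal.ofReal (μ g)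
  have hp : ∑' g, p g = 1 := tsum_ofReal_eq_one hμ
  have hconv : ∀ n x, convPow μ n x = (walkLaw p n x).toReal := fun n x => by
    rw [← convPow_toReal hp]
    congr; funext g
    exact (ENNReal.toReal_ofReal (hμ.1 g)).symm
  have hnd' : ∀ x, ∃ n, 1 ≤ n ∧ 0 < walkLaw p n x := fun x => by
    obtain ⟨n, hn, hpos⟩ := hnd x
    rw [hconv] at hpos
    exact ⟨n, hn, (ENNReal.toReal_pos_iff.mp hpos).1⟩
  have hsum : ∑' h : H, hitLaw p H h = 1 := tsum_hitLaw hp hnd'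
  refine ⟨?_, ?_⟩
  · rw [← ENNReal.tsum_toReal_eq fun h => ne_top_of_le_ne_top ENNReal.one_ne_top
      (hsum ▸ ENNReal.le_tsum (f := fun h : H => hitLaw p H h) h), hsum, ENNReal.toReal_one]
  · simp only [hconv, convPow_toReal hsum, walkLaw_hitLaw_eq_kthVisitLaw]
    rw [summable_toReal_iff fun n => ne_top_of_le_ne_top ENNReal.one_ne_top (walkLaw_le_one hp n 1),
      summable_toReal_iff fun k => ne_top_of_le_ne_top ENNReal.one_ne_top
        (walkLaw_hitLaw_eq_kthVisitLaw (p := p) k 1 ▸ walkLaw_le_one hsum k 1),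
      tsum_kthVisitLaw_one]

/-- For a finite-index subgroup H of G and a non-degenerate probability measure μ
on G, the hitting measure on H is a probability measure (the hitting time is a.s.
finite), and the μ-walk on G is transient iff the hitting-measure walk on H is
transient. -/
theorem stmt16 {G : Type*} [Group G] [Countable G] (H : Subgroup G) [H.FiniteIndex]
    (μ : G → ℝ) (hμ : IsPMF μ)
    (hnd : ∀ g : G, ∃ n : ℕ, 1 ≤ n ∧ 0 < convPow μ n g) :
    (∑' h : H, hitMeas μ H (h : G)) = 1 ∧
      (Summable (fun n : ℕ => convPow μ n (1 : G)) ↔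
        Summable (fun n : ℕ => convPow (fun h : H => hitMeas μ H (h : G)) n (1 : H))) :=
  stmt16_general H μ hμ hnd
end
end
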